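/- Let J ⊂ S be a saturated quasi-stable monomial ideal, let reg(J) be the maximal degree of a term in the Pommaret basis P(J), and let m ≥ reg(J). Let G = {f_α : x^α ∈ P(J_{≥m})} be a P(J_{≥m})-marked basis, where J_{≥m} is the (quasi-stable) truncation of J in degree m. Then for every x^α ∈ P(J_{≥m}) and every term x^η in the support of x^α − f_α, one has min(x^η) ≤ min(x^α). -/
import Mathlib


open MvPolynomial

namespace MB

/-- Exponent (multi-index) of a term in the variables `x_0, …, x_n`. -/
abbrev Exp (n : ℕ) := Fin (n+1) →₀ ℕ

variable {n : ℕ}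

/-- Total degree of a term. -/
def degE (α : Exp n) : ℕ := α.sum fun _ e => e

/-- `x_i` is a multiplicative variable for the term `x^α`, i.e. `x_i ≤ min(x^α)`. -/
def mult (α : Exp n) (i : Fin (n+1)) : Prop := ∀ j ∈ α.support, i ≤ j

/-- Every variable occurring in `x^δ` is multiplicative for `x^α`. -/
def multExp (α δ : Exp n) : Prop := ∀ i ∈ δ.support, mult α i

/-- Pommaret cone of a term. -/
def pommaretCone (α : Exp n) : Set (Exp n) := {γ | ∃ δ, multExp α δ ∧ γ = α + δ}

/-- A set of terms is (the set of terms of) a monomial ideal. -/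
def IsMonomialIdeal (T : Set (Exp n)) : Prop := ∀ α ∈ T, ∀ β, α + β ∈ T

/-- `P` is a Pommaret basis of the set of terms `T`: the terms of `T` are the
disjoint union of the Pommaret cones of the elements of `P`. -/
def IsPommaretBasis (P : Finset (Exp n)) (T : Set (Exp n)) : Prop :=
  (∀ γ, γ ∈ T ↔ ∃ α ∈ P, γ ∈ pommaretCone α) ∧
  ∀ γ : Exp n, ∀ α ∈ P, ∀ β ∈ P, γ ∈ pommaretCone α → γ ∈ pommaretCone β → α = β

/-- Lexicographic order on terms (with `x_n > … > x_0` significance). -/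
def lexLt (η δ : Exp n) : Prop := ∃ i, η i < δ i ∧ ∀ j, i < j → η j = δ j

/-- Terms of the saturation `(J : (x_0,…,x_n)^∞)` of a monomial ideal. -/
def satTerms (T : Set (Exp n)) : Set (Exp n) :=
  {α | ∃ j : ℕ, ∀ β : Exp n, degE β = j → α + β ∈ T}

section ModuleDefs

variable (A : Type*) [CommRing A] {κ : Type*} [Fintype κ] [DecidableEq κ]

/-- The term `x^α e_k` of the free module. -/
noncomputable def termV (α : Exp n) (k : κ) : κ → MvPolynomial (Fin (n+1)) A :=
  Pi.single k (monomial α 1)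

variable {A}

/-- Homogeneity of degree `s` in `S^m_d` (with weight vector `d`). -/
def IsHomogV (d : κ → ℤ) (f : κ → MvPolynomial (Fin (n+1)) A) (s : ℤ) : Prop :=
  ∀ k, ∀ β ∈ (f k).support, (degE β : ℤ) + d k = s

variable (A)

/-- The degree-`s` component `(S^m_d)_s` as an `A`-submodule. -/
noncomputable def homogCompV (d : κ → ℤ) (s : ℤ) :
    Submodule A (κ → MvPolynomial (Fin (n+1)) A) where
  carrier := {f | IsHomogV d f s}
  add_mem' := by
    intro f g hf hg k β hβ
    rcases Finset.mem_union.mp (MvPolynomial.support_add hβ) with h | h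
    · exact hf k β h
    · exact hg k β h
  zero_mem' := by intro k β hβ; simp at hβ
  smul_mem' := by
    intro a f hf k β hβ
    exact hf k β (MvPolynomial.support_smul hβ)

/-- The set `N(U)` of terms of `S^m_d` not belonging to the monomial module `U = ⊕ J^(k) e_k`. -/
def NUTerms (J : κ → Set (Exp n)) : Set (κ → MvPolynomial (Fin (n+1)) A) :=
  {v | ∃ k, ∃ α, α ∉ J k ∧ v = termV A α k}

/-- The degree-`s` part `N(U)_s`. -/
def NUTermsDeg (d : κ → ℤ) (J : κ → Set (Exp n)) (s : ℤ) :
    Set (κ → MvPolynomial (Fin (n+1)) A) :=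
  {v | ∃ k, ∃ α, α ∉ J k ∧ (degE α : ℤ) + d k = s ∧ v = termV A α k}

variable {A}

/-- A `P(U)`-marked set: for each `x^α e_k` with `α ∈ P k`, the element `g α k` has
head term `x^α e_k` (coefficient `1`) and all other terms in `N(U)` of the same degree. -/
def IsMarkedSetV (d : κ → ℤ) (J : κ → Set (Exp n)) (P : κ → Finset (Exp n))
    (g : Exp n → κ → (κ → MvPolynomial (Fin (n+1)) A)) : Prop :=
  ∀ k, ∀ α ∈ P k, ∀ l, ∀ β ∈ ((g α k - termV A α k) l).support,
    β ∉ J l ∧ (degE β : ℤ) + d l = (degE α : ℤ) + d k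

/-- The underlying set of elements of the marked set `G`. -/
def GSet (P : κ → Finset (Exp n)) (g : Exp n → κ → (κ → MvPolynomial (Fin (n+1)) A)) :
    Set (κ → MvPolynomial (Fin (n+1)) A) :=
  {v | ∃ k, ∃ α ∈ P k, v = g α k}

/-- The set `G^(s)` of multiplicative multiples of elements of `G` of degree `s`. -/
def GSdeg (d : κ → ℤ) (P : κ → Finset (Exp n))
    (g : Exp n → κ → (κ → MvPolynomial (Fin (n+1)) A)) (s : ℤ) :
    Set (κ → MvPolynomial (Fin (n+1)) A) :=
  {v | ∃ k, ∃ α ∈ P k, ∃ δ : Exp n, multExp α δ ∧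
    (degE δ : ℤ) + (degE α : ℤ) + d k = s ∧ v = (monomial δ (1:A)) • g α k}

/-- The `S`-submodule `⟨G⟩` generated by the marked set. -/
noncomputable def GmodS (P : κ → Finset (Exp n))
    (g : Exp n → κ → (κ → MvPolynomial (Fin (n+1)) A)) :
    Submodule (MvPolynomial (Fin (n+1)) A) (κ → MvPolynomial (Fin (n+1)) A) :=
  Submodule.span _ (GSet P g)

/-- The degree-`s` component `⟨G⟩_s` as an `A`-submodule. -/
noncomputable def GmodDeg (d : κ → ℤ) (P : κ → Finset (Exp n))
    (g : Exp n → κ → (κ → MvPolynomial (Fin (n+1)) A)) (s : ℤ) :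
    Submodule A (κ → MvPolynomial (Fin (n+1)) A) :=
  (GmodS P g).restrictScalars A ⊓ homogCompV A d s

/-- `G` is a marked basis: `(S^m_d)_s = ⟨G⟩_s ⊕ ⟨N(U)_s⟩^A` for every degree `s`. -/
def MarkedBasisProp (d : κ → ℤ) (J : κ → Set (Exp n)) (P : κ → Finset (Exp n))
    (g : Exp n → κ → (κ → MvPolynomial (Fin (n+1)) A)) : Prop :=
  ∀ s : ℤ,
    homogCompV A d s = GmodDeg d P g s ⊔ Submodule.span A (NUTermsDeg A d J s) ∧
    GmodDeg d P g s ⊓ Submodule.span A (NUTermsDeg A d J s) = ⊥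

/-- One step of the reduction relation `→_G`. -/
def RedStep (P : κ → Finset (Exp n)) (g : Exp n → κ → (κ → MvPolynomial (Fin (n+1)) A))
    (h h' : κ → MvPolynomial (Fin (n+1)) A) : Prop :=
  ∃ k, ∃ α ∈ P k, ∃ η : Exp n, multExp α η ∧
    (h k).coeff (η + α) ≠ 0 ∧
    h' = h - ((h k).coeff (η + α)) • ((monomial η (1:A)) • g α k)

end ModuleDefs

section IdealDefs

variable {A : Type*} [CommRing A]

/-- A `P(J)`-marked set of polynomials. -/
def IsMarkedSetI (T : Set (Exp n)) (P : Finset (Exp n))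
    (g : Exp n → MvPolynomial (Fin (n+1)) A) : Prop :=
  ∀ α ∈ P, ∀ β ∈ (g α - monomial α (1:A)).support, β ∉ T ∧ degE β = degE α

variable (A)

/-- The degree-`s` monomials not in `T`. -/
def NTermsDegI (T : Set (Exp n)) (s : ℕ) : Set (MvPolynomial (Fin (n+1)) A) :=
  {p | ∃ β, β ∉ T ∧ degE β = s ∧ p = monomial β (1:A)}

variable {A}

/-- Degree-`s` part of the ideal generated by the marked set. -/
noncomputable def IdealDegI (P : Finset (Exp n)) (g : Exp n → MvPolynomial (Fin (n+1)) A)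
    (s : ℕ) : Submodule A (MvPolynomial (Fin (n+1)) A) :=
  (Ideal.span (g '' ↑P)).restrictScalars A ⊓ homogeneousSubmodule (Fin (n+1)) A s

/-- A `P(J)`-marked basis of polynomials: `S_s = (G)_s ⊕ ⟨N(J)_s⟩^A` for all `s`. -/
def IsMarkedBasisI (T : Set (Exp n)) (P : Finset (Exp n))
    (g : Exp n → MvPolynomial (Fin (n+1)) A) : Prop :=
  IsMarkedSetI T P g ∧ ∀ s : ℕ,
    homogeneousSubmodule (Fin (n+1)) A s
      = IdealDegI P g s ⊔ Submodule.span A (NTermsDegI A T s) ∧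
    IdealDegI P g s ⊓ Submodule.span A (NTermsDegI A T s) = ⊥

/-- The polynomial `p` involves only multiplicative variables of `x^α`. -/
def multPoly (α : Exp n) (p : MvPolynomial (Fin (n+1)) A) : Prop :=
  ∀ β ∈ p.support, multExp α β

end IdealDefs

section SyzDefs

variable {A : Type*} [CommRing A]

/-- The map `(c_l) ↦ Σ_l c_l f_{α(l)}` whose kernel is `Syz(G)`. -/
noncomputable def syzMap (P : Finset (Exp n)) (g : Exp n → MvPolynomial (Fin (n+1)) A) :
    (↥P → MvPolynomial (Fin (n+1)) A) →ₗ[MvPolynomial (Fin (n+1)) A]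
      MvPolynomial (Fin (n+1)) A where
  toFun c := ∑ l : ↥P, c l * g l.1
  map_add' c c' := by simp [add_mul, Finset.sum_add_distrib]
  map_smul' a c := by simp [Finset.mul_sum, mul_assoc]

/-- Weight vector for the syzygy module: `d_l = deg x^{α(l)}`. -/
def ddeg (P : Finset (Exp n)) : ↥P → ℤ := fun l => (degE l.1 : ℤ)

/-- Terms of the monomial ideal generated by the nonmultiplicative variables of `x^{α(l)}`. -/
def Jsyz (P : Finset (Exp n)) : ↥P → Set (Exp n) :=
  fun l => {β | ∃ i ∈ β.support, ¬ mult (l : Exp n) i}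

open Classical in
/-- The claimed Pommaret basis `{x_i e_l : x_i nonmultiplicative for x^{α(l)}}`. -/
noncomputable def Psyz (P : Finset (Exp n)) : ↥P → Finset (Exp n) := fun l =>
  (Finset.univ.filter fun i : Fin (n+1) => ¬ mult (l : Exp n) i).image
    fun i => Finsupp.single i 1

open Classical in
/-- The syzygy `S_{k;i} = x_i e_k − Σ_l P_l^{k;i} e_l`. -/
noncomputable def Ssyz (P : Finset (Exp n))
    (Pc : ↥P → Fin (n+1) → ↥P → MvPolynomial (Fin (n+1)) A)
    (k : ↥P) (i : Fin (n+1)) : ↥P → MvPolynomial (Fin (n+1)) A :=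
  fun l => (if l = k then (X i : MvPolynomial (Fin (n+1)) A) else 0) - Pc k i l

/-- The set `G_Syz^(s)`. -/
def GSyzDeg (P : Finset (Exp n))
    (Pc : ↥P → Fin (n+1) → ↥P → MvPolynomial (Fin (n+1)) A) (s : ℤ) :
    Set (↥P → MvPolynomial (Fin (n+1)) A) :=
  {v | ∃ k : ↥P, ∃ i : Fin (n+1), ¬ mult (k : Exp n) i ∧ ∃ δ : Exp n,
    (∀ j ∈ δ.support, j ≤ i) ∧ (degE δ : ℤ) + 1 + ddeg P k = s ∧
    v = (monomial δ (1:A)) • Ssyz P Pc k i}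

end SyzDefs


section Statement19Aux

variable {n : ℕ}

lemma degE_add (a b : Exp n) : degE (a + b) = degE a + degE b :=
  Finsupp.sum_add_index' (fun _ => rfl) (fun _ _ _ => rfl)

lemma degE_single (k : Fin (n+1)) (c : ℕ) : degE (Finsupp.single k c) = c :=
  Finsupp.sum_single_index rfl

lemma degE_zero : degE (0 : Exp n) = 0 :=
  Finsupp.sum_zero_index

lemma le_degE {a : Exp n} {i : Fin (n+1)} (h : i ∈ a.support) : a i ≤ degE a :=
  Finset.single_le_sum (f := fun j => a j) (fun _ _ => Nat.zero_le _) h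

lemma degE_eq_zero {a : Exp n} (h : degE a = 0) : a = 0 := by
  ext i
  by_contra hi
  have hmem : i ∈ a.support := Finsupp.mem_support_iff.mpr (by simpa using hi)
  have hle := le_degE hmem
  simp only [Finsupp.coe_zero, Pi.zero_apply] at hi
  omega

lemma degE_one {δ : Exp n} (h : degE δ = 1) : ∃ k, δ = Finsupp.single k 1 := by
  have hne : δ ≠ 0 := by
    rintro rfl; rw [degE_zero] at h; omega
  obtain ⟨k, hk⟩ := Finsupp.support_nonempty_iff.mpr hne
  refine ⟨k, ?_⟩
  have hk1 : δ k = 1 :=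
    le_antisymm (by have := le_degE hk; omega) (Nat.one_le_iff_ne_zero.mpr (Finsupp.mem_support_iff.mp hk))
  ext j
  rcases eq_or_ne j k with rfl | hjk
  · rw [hk1, Finsupp.single_apply, if_pos rfl]
  · rw [Finsupp.single_apply, if_neg (fun hh => hjk hh.symm)]
    by_contra hj
    have hjm : j ∈ δ.support := Finsupp.mem_support_iff.mpr hj
    have hsub : ({k, j} : Finset (Fin (n+1))) ⊆ δ.support := by
      intro x hx
      rcases Finset.mem_insert.mp hx with rfl | hx
      · exact hk
      · rw [Finset.mem_singleton.mp hx]; exact hjm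
    have h2 : ∑ x ∈ ({k, j} : Finset (Fin (n+1))), δ x ≤ degE δ :=
      Finset.sum_le_sum_of_subset hsub
    rw [Finset.sum_pair (fun hh => hjk hh.symm)] at h2
    omega

/-- Auxiliary submodule: `A`-span of the products `x_k · f_γ` with `k < L`. -/
noncomputable def Wspan (A : Type*) [CommRing A] (Pm : Finset (Exp n))
    (g : Exp n → MvPolynomial (Fin (n+1)) A) (L : ℕ) :
    Submodule A (MvPolynomial (Fin (n+1)) A) :=
  Submodule.span A {p | ∃ (k : Fin (n+1)) (γ : Exp n), γ ∈ Pm ∧ (k : ℕ) < L ∧ p = X k * g γ}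

lemma Wspan_mono {A : Type*} [CommRing A] {Pm : Finset (Exp n)}
    {g : Exp n → MvPolynomial (Fin (n+1)) A} {L L' : ℕ} (h : L ≤ L') :
    Wspan A Pm g L ≤ Wspan A Pm g L' := by
  apply Submodule.span_mono
  rintro p ⟨k, γ, h1, h2, h3⟩
  exact ⟨k, γ, h1, lt_of_lt_of_le h2 h, h3⟩

lemma mem_Wspan {A : Type*} [CommRing A] {Pm : Finset (Exp n)}
    {g : Exp n → MvPolynomial (Fin (n+1)) A} {L : ℕ} {k : Fin (n+1)} {γ : Exp n}
    (h1 : γ ∈ Pm) (h2 : (k : ℕ) < L) : X k * g γ ∈ Wspan A Pm g L :=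
  Submodule.subset_span ⟨k, γ, h1, h2, rfl⟩

lemma Wspan_le_ideal {A : Type*} [CommRing A] {Pm : Finset (Exp n)}
    {g : Exp n → MvPolynomial (Fin (n+1)) A} {L : ℕ} :
    Wspan A Pm g L ≤ (Ideal.span (g '' ↑Pm)).restrictScalars A := by
  apply Submodule.span_le.mpr
  rintro p ⟨k, γ, hγ, _, rfl⟩
  exact Ideal.mul_mem_left _ _ (Ideal.subset_span ⟨γ, by simpa using hγ, rfl⟩)

lemma mem_NTermsDegI {A : Type*} [CommRing A] {T : Set (Exp n)} {s : ℕ} {β : Exp n}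
    (h1 : β ∉ T) (h2 : degE β = s) : (monomial β (1:A)) ∈ NTermsDegI A T s :=
  ⟨β, h1, h2, rfl⟩

lemma X_mul_as_sum {A : Type*} [CommRing A] (k : Fin (n+1)) (p : MvPolynomial (Fin (n+1)) A) :
    X k * p = ∑ η ∈ p.support, (coeff η p) • (monomial (Finsupp.single k 1 + η) (1:A)) := by
  conv_lhs => rw [p.as_sum]
  rw [Finset.mul_sum]
  refine Finset.sum_congr rfl fun η hη => ?_
  rw [smul_monomial, smul_eq_mul, mul_one, monomial_single_add, pow_one]

end Statement19Aux

/-- Theorem `varInTails`: for a saturated quasi-stable ideal `J`,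
`m ≥ reg(J)`, and a `P(J_{≥m})`-marked basis `G`, every term `x^η` in the tail of
`f_α ∈ G` satisfies `min(x^η) ≤ min(x^α)`. -/
theorem statement19 {n : ℕ} {A : Type*} [CommRing A] [IsNoetherianRing A]
    (T : Set (Exp n)) (P : Finset (Exp n))
    (hT : IsMonomialIdeal T) (hP : IsPommaretBasis P T)
    (hsat : T = satTerms T)
    (r : ℕ) (hub : ∀ α ∈ P, degE α ≤ r) (hatt : ∃ α ∈ P, degE α = r)
    (m : ℕ) (hm : r ≤ m)
    (Pm : Finset (Exp n)) (hPm : IsPommaretBasis Pm {α | α ∈ T ∧ m ≤ degE α})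
    (g : Exp n → MvPolynomial (Fin (n+1)) A)
    (hG : IsMarkedBasisI {α | α ∈ T ∧ m ≤ degE α} Pm g) :
    ∀ α ∈ Pm, ∀ η ∈ (monomial α (1:A) - g α).support, ∃ i ∈ η.support, mult α i := by
  classical
  obtain ⟨hPmCov, hPmDisj⟩ := hPm
  obtain ⟨hPCov, _hPDisj⟩ := hP
  have hGset := hG.1
  -- F1: elements of Pm are in the truncated ideal
  have hPmem : ∀ β ∈ Pm, β ∈ T ∧ m ≤ degE β := by
    intro β hβ
    have hx : β ∈ {α : Exp n | α ∈ T ∧ m ≤ degE α} :=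
      (hPmCov β).mpr ⟨β, hβ, 0, fun i hi => absurd hi (by simp), (add_zero β).symm⟩
    exact hx
  -- F2: every element of Pm has degree exactly m
  have hdegPm : ∀ β ∈ Pm, degE β = m := by
    intro β hβ
    by_contra hne
    have h1 : m < degE β := lt_of_le_of_ne (hPmem β hβ).2 (Ne.symm hne)
    obtain ⟨γ, hγP, δ, hmδ, hβeq⟩ := (hPCov β).mp (hPmem β hβ).1
    have hdγ : degE γ ≤ m := le_trans (hub γ hγP) hm
    have hdadd : degE β = degE γ + degE δ := by rw [hβeq, degE_add]
    have hδne : δ ≠ 0 := by rintro rfl; rw [degE_zero] at hdadd; omega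
    have hβne : β ≠ 0 := by rintro rfl; rw [degE_zero] at h1; omega
    have hβsne : β.support.Nonempty := Finsupp.support_nonempty_iff.mpr hβne
    set i := β.support.min' hβsne with hidef
    have himem : i ∈ β.support := Finset.min'_mem _ _
    have himin : ∀ j ∈ β.support, i ≤ j := fun j hj => Finset.min'_le _ j hj
    have hiδ : i ∈ δ.support := by
      by_contra hiδ
      have hδi : δ i = 0 := Finsupp.notMem_support_iff.mp hiδ
      have hβi : β i ≠ 0 := Finsupp.mem_support_iff.mp himem
      have happ : β i = γ i + δ i := by rw [hβeq]; rfl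
      have hγi : γ i ≠ 0 := by omega
      obtain ⟨d, hd⟩ := Finsupp.support_nonempty_iff.mpr hδne
      have hdi : d ≤ i := hmδ d hd i (Finsupp.mem_support_iff.mpr hγi)
      have hdβ : d ∈ β.support := by
        have happ2 : β d = γ d + δ d := by rw [hβeq]; rfl
        have := Finsupp.mem_support_iff.mp hd
        exact Finsupp.mem_support_iff.mpr (by omega)
      have hid : i = d := le_antisymm (himin d hdβ) hdi
      exact hiδ (by rw [hid]; exact hd)
    have hle1 : Finsupp.single i 1 ≤ δ :=
      Finsupp.single_le_iff.mpr (Nat.one_le_iff_ne_zero.mpr (Finsupp.mem_support_iff.mp hiδ))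
    set δ₂ := δ - Finsupp.single i 1 with hδ₂def
    have hδsum : δ₂ + Finsupp.single i 1 = δ := tsub_add_cancel_of_le hle1
    have hmδ₂ : multExp γ δ₂ := by
      intro j hj
      apply hmδ
      have h1' : δ₂ j ≠ 0 := Finsupp.mem_support_iff.mp hj
      have h2' : δ₂ j ≤ δ j := by
        rw [hδ₂def, Finsupp.tsub_apply]; exact Nat.sub_le _ _
      exact Finsupp.mem_support_iff.mpr (by omega)
    have hα'T : γ + δ₂ ∈ T := (hPCov (γ + δ₂)).mpr ⟨γ, hγP, δ₂, hmδ₂, rfl⟩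
    have hdα' : degE β = degE (γ + δ₂) + 1 := by
      rw [hβeq, ← hδsum, ← add_assoc, degE_add (γ + δ₂), degE_single]
    have hα'T' : γ + δ₂ ∈ {α : Exp n | α ∈ T ∧ m ≤ degE α} := ⟨hα'T, by omega⟩
    obtain ⟨β', hβ'Pm, δ', hmδ', hα'eq⟩ := (hPmCov (γ + δ₂)).mp hα'T'
    have hβeq2 : β = β' + (δ' + Finsupp.single i 1) := by
      rw [← add_assoc, ← hα'eq, hβeq, ← hδsum, ← add_assoc]
    have hmm : multExp β' (δ' + Finsupp.single i 1) := by
      intro j hj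
      have hj' : δ' j ≠ 0 ∨ j = i := by
        have hjne := Finsupp.mem_support_iff.mp hj
        by_contra hcon
        push_neg at hcon
        have happ : ((δ' + Finsupp.single i 1 : Exp n)) j = δ' j + (Finsupp.single i 1) j :=
          Finsupp.add_apply _ _ _
        rw [Finsupp.single_apply, if_neg (fun hh => hcon.2 hh.symm)] at happ
        omega
      rcases hj' with hj' | rfl
      · exact hmδ' j (Finsupp.mem_support_iff.mpr hj')
      · intro l hl
        apply himin
        have hβ'l : β' l ≠ 0 := Finsupp.mem_support_iff.mp hl
        have happ : β l = β' l + ((δ' + Finsupp.single i 1 : Exp n)) l := by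
          rw [hβeq2]; exact Finsupp.add_apply _ _ _
        exact Finsupp.mem_support_iff.mpr (by omega)
    have hββ' : β = β' :=
      hPmDisj β β hβ β' hβ'Pm ⟨0, fun i hi => absurd hi (by simp), (add_zero β).symm⟩
        ⟨_, hmm, hβeq2⟩
    have hzero : δ' + Finsupp.single i 1 = 0 := by
      have h := hβeq2
      rw [← hββ'] at h
      exact (left_eq_add.mp h)
    have := DFunLike.congr_fun hzero i
    rw [Finsupp.add_apply, Finsupp.single_apply, if_pos rfl] at this
    simp at this
  -- F4: Pommaret decomposition in degree m+1
  have hF4 : ∀ τ : Exp n, τ ∈ T → degE τ = m + 1 →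
      ∃ k β, β ∈ Pm ∧ τ = Finsupp.single k 1 + β ∧ ∀ j ∈ τ.support, k ≤ j := by
    intro τ h1 h2
    obtain ⟨β, hβ, δ, hmδ, heq⟩ := (hPmCov τ).mp ⟨h1, by omega⟩
    have hdβ := hdegPm β hβ
    have hdd : degE τ = degE β + degE δ := by rw [heq, degE_add]
    obtain ⟨k, hk⟩ := degE_one (δ := δ) (by omega)
    refine ⟨k, β, hβ, by rw [heq, hk, add_comm], ?_⟩
    intro j hj
    have hτj : τ j ≠ 0 := Finsupp.mem_support_iff.mp hj
    have happ : τ j = β j + δ j := by rw [heq]; rfl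
    by_cases hβj : β j = 0
    · have hδj : δ j ≠ 0 := by omega
      rw [hk, Finsupp.single_apply] at hδj
      by_cases hkj : k = j
      · exact le_of_eq hkj
      · rw [if_neg hkj] at hδj; exact absurd rfl hδj
    · have hks : k ∈ δ.support := by
        rw [hk]; simp
      exact hmδ k hks j (Finsupp.mem_support_iff.mpr hβj)
  -- multiplicative multiples of non-members are non-members
  have hFnot : ∀ (k : Fin (n+1)) (η : Exp n), η ∉ T → degE η = m →
      (∀ j ∈ η.support, k ≤ j) → (Finsupp.single k 1 + η) ∉ T := by
    intro k η hη hdη hmin hcon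
    have hdτ : degE (Finsupp.single k 1 + η) = m + 1 := by
      rw [degE_add, degE_single, hdη]; omega
    obtain ⟨k', β, hβ, heq, hall⟩ := hF4 _ hcon hdτ
    have hkmem : k ∈ (Finsupp.single k 1 + η).support := by
      apply Finsupp.mem_support_iff.mpr
      have happ : ((Finsupp.single k 1 + η : Exp n)) k = (Finsupp.single k 1) k + η k :=
        Finsupp.add_apply _ _ _
      rw [Finsupp.single_apply, if_pos rfl] at happ
      omega
    have hk'k : k' ≤ k := hall k hkmem
    have hkk' : k ≤ k' := by
      have hk'mem : ((Finsupp.single k 1 + η : Exp n)) k' ≠ 0 := by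
        rw [heq]
        have happ : ((Finsupp.single k' 1 + β : Exp n)) k' = (Finsupp.single k' 1) k' + β k' :=
          Finsupp.add_apply _ _ _
        rw [Finsupp.single_apply, if_pos rfl] at happ
        omega
      by_cases h : η k' = 0
      · have happ : ((Finsupp.single k 1 + η : Exp n)) k' = (Finsupp.single k 1) k' + η k' :=
          Finsupp.add_apply _ _ _
        rw [Finsupp.single_apply] at happ
        by_cases hkk : k = k'
        · exact le_of_eq hkk
        · rw [if_neg hkk] at happ; omega
      · exact hmin k' (Finsupp.mem_support_iff.mpr h)
    have hkeq : k = k' := le_antisymm hkk' hk'k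
    rw [← hkeq] at heq
    have hηβ : η = β := by
      ext j
      have h2 := DFunLike.congr_fun heq j
      rw [Finsupp.add_apply, Finsupp.add_apply] at h2
      omega
    exact hη (by rw [hηβ]; exact (hPmem β hβ).1)
  -- the span of terms outside the truncated ideal in degree m+1
  set Nsp : Submodule A (MvPolynomial (Fin (n+1)) A) :=
    Submodule.span A (NTermsDegI A {α : Exp n | α ∈ T ∧ m ≤ degE α} (m+1)) with hNspdef
  -- ELIM: reduction of terms of the ideal in degree m+1
  have hELIM : ∀ L : ℕ, ∀ τ : Exp n, τ ∈ T → degE τ = m + 1 →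
      (∃ k ∈ τ.support, (k : ℕ) < L) → (monomial τ (1:A)) ∈ Wspan A Pm g L ⊔ Nsp := by
    intro L
    induction L using Nat.strong_induction_on with
    | _ L IH =>
      rintro τ hτT hτd ⟨k0, hk0s, hk0L⟩
      obtain ⟨k, β, hβPm, hτeq, hkmin⟩ := hF4 τ hτT hτd
      have hkL : (k : ℕ) < L := lt_of_le_of_lt (hkmin k0 hk0s) hk0L
      have hsplitX : (monomial τ (1:A)) = X k * g β + X k * (monomial β (1:A) - g β) := by
        have h1' : X k * g β + X k * (monomial β (1:A) - g β) = X k * monomial β (1:A) := by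
          ring
        rw [h1', hτeq, monomial_single_add, pow_one]
      rw [hsplitX]
      refine Submodule.add_mem _ (Submodule.mem_sup_left (mem_Wspan hβPm hkL)) ?_
      rw [X_mul_as_sum]
      refine Submodule.sum_mem _ fun η hη => Submodule.smul_mem _ _ ?_
      have hηsupp : η ∈ (g β - monomial β (1:A)).support := by
        rw [← support_neg, neg_sub]; exact hη
      obtain ⟨hηT', hηd⟩ := hGset β hβPm η hηsupp
      have hηdm : degE η = m := by rw [hηd, hdegPm β hβPm]
      have hηT : η ∉ T := fun hc => hηT' ⟨hc, hηdm.ge⟩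
      have hdτ' : degE (Finsupp.single k 1 + η) = m + 1 := by
        rw [degE_add, degE_single, hηdm]; omega
      by_cases hc : (Finsupp.single k 1 + η) ∈ T
      · obtain ⟨j, hjs, hjk⟩ : ∃ j ∈ η.support, ¬ k ≤ j := by
          by_contra hall
          push_neg at hall
          exact hFnot k η hηT hηdm hall hc
        have hjτ : j ∈ (Finsupp.single k 1 + η).support := by
          apply Finsupp.mem_support_iff.mpr
          have happ : ((Finsupp.single k 1 + η : Exp n)) j = (Finsupp.single k 1) j + η j :=
            Finsupp.add_apply _ _ _
          have := Finsupp.mem_support_iff.mp hjs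
          omega
        have hjlt : (j : ℕ) < (k : ℕ) := Fin.lt_def.mp (lt_of_not_ge hjk)
        have hmem := IH (k : ℕ) hkL (Finsupp.single k 1 + η) hc hdτ' ⟨j, hjτ, hjlt⟩
        exact (sup_le_sup_right (Wspan_mono hkL.le) Nsp) hmem
      · exact Submodule.mem_sup_right (Submodule.subset_span
          (mem_NTermsDegI (fun hx => hc hx.1) hdτ'))
  -- main argument
  intro α hα η0 hη0
  by_contra hbad0
  push_neg at hbad0
  have hη0supp : η0 ∈ (g α - monomial α (1:A)).support := by
    rw [← support_neg, neg_sub]; exact hη0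
  obtain ⟨hη0T', hη0d⟩ := hGset α hα η0 hη0supp
  have hαd : degE α = m := hdegPm α hα
  have hη0dm : degE η0 = m := by rw [hη0d, hαd]
  have hη0T : η0 ∉ T := fun hc => hη0T' ⟨hc, hη0dm.ge⟩
  have hαT' := hPmem α hα
  have hη0ne : η0 ≠ 0 := by
    rintro rfl
    rw [degE_zero] at hη0dm
    have hα0 : α = 0 := degE_eq_zero (by omega)
    rw [hα0] at hαT'
    exact hη0T' ⟨hαT'.1, hαT'.2⟩
  have hη0sne : η0.support.Nonempty := Finsupp.support_nonempty_iff.mpr hη0ne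
  set j0 := η0.support.min' hη0sne with hj0def
  have hj0mem : j0 ∈ η0.support := Finset.min'_mem _ _
  have hj0min : ∀ j ∈ η0.support, j0 ≤ j := fun j hj => Finset.min'_le _ j hj
  obtain ⟨jh, hjhα, hjh⟩ : ∃ j ∈ α.support, ¬ j0 ≤ j := by
    have hnm : ¬ ∀ j ∈ α.support, j0 ≤ j := hbad0 j0 hj0mem
    push_neg at hnm
    obtain ⟨j, hj1, hj2⟩ := hnm
    exact ⟨j, hj1, not_le_of_gt hj2⟩
  have hheadT : (Finsupp.single j0 1 + α) ∈ T := by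
    rw [add_comm]; exact hT α hαT'.1 (Finsupp.single j0 1)
  have hheadd : degE (Finsupp.single j0 1 + α) = m + 1 := by
    rw [degE_add, degE_single, hαd]; omega
  have hjhmem : jh ∈ (Finsupp.single j0 1 + α).support := by
    apply Finsupp.mem_support_iff.mpr
    have happ : ((Finsupp.single j0 1 + α : Exp n)) jh = (Finsupp.single j0 1) jh + α jh :=
      Finsupp.add_apply _ _ _
    have := Finsupp.mem_support_iff.mp hjhα
    omega
  have hTop : X j0 * g α ∈ Wspan A Pm g (j0 : ℕ) ⊔ Nsp := by
    have hsplitX : X j0 * g α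
        = monomial (Finsupp.single j0 1 + α) (1:A) - X j0 * (monomial α (1:A) - g α) := by
      rw [monomial_single_add, pow_one]; ring
    rw [hsplitX]
    refine Submodule.sub_mem _ ?_ ?_
    · exact hELIM (j0 : ℕ) _ hheadT hheadd ⟨jh, hjhmem, Fin.lt_def.mp (lt_of_not_ge hjh)⟩
    · rw [X_mul_as_sum]
      refine Submodule.sum_mem _ fun η hη => Submodule.smul_mem _ _ ?_
      have hηsupp : η ∈ (g α - monomial α (1:A)).support := by
        rw [← support_neg, neg_sub]; exact hη
      obtain ⟨hηT', hηd⟩ := hGset α hα η hηsupp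
      have hηdm : degE η = m := by rw [hηd, hαd]
      have hηT : η ∉ T := fun hc => hηT' ⟨hc, hηdm.ge⟩
      have hdτ' : degE (Finsupp.single j0 1 + η) = m + 1 := by
        rw [degE_add, degE_single, hηdm]; omega
      by_cases hc : (Finsupp.single j0 1 + η) ∈ T
      · obtain ⟨j, hjs, hjk⟩ : ∃ j ∈ η.support, ¬ j0 ≤ j := by
          by_contra hall
          push_neg at hall
          exact hFnot j0 η hηT hηdm hall hc
        have hjτ : j ∈ (Finsupp.single j0 1 + η).support := by
          apply Finsupp.mem_support_iff.mpr
          have happ : ((Finsupp.single j0 1 + η : Exp n)) j = (Finsupp.single j0 1) j + η j :=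
            Finsupp.add_apply _ _ _
          have := Finsupp.mem_support_iff.mp hjs
          omega
        exact hELIM (j0 : ℕ) _ hc hdτ' ⟨j, hjτ, Fin.lt_def.mp (lt_of_not_ge hjk)⟩
      · exact Submodule.mem_sup_right (Submodule.subset_span
          (mem_NTermsDegI (fun hx => hc hx.1) hdτ'))
  obtain ⟨w, hw, ν, hν, hsum⟩ := Submodule.mem_sup.mp hTop
  have hν_eq : ν = X j0 * g α - w := eq_sub_of_add_eq' hsum
  have hνId : ν ∈ IdealDegI Pm g (m+1) := by
    refine Submodule.mem_inf.mpr ⟨?_, ?_⟩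
    · rw [Submodule.restrictScalars_mem, hν_eq]
      refine Submodule.sub_mem _ ?_ ?_
      · exact Ideal.mul_mem_left _ _ (Ideal.subset_span ⟨α, by simpa using hα, rfl⟩)
      · exact Wspan_le_ideal hw
    · have hle : Nsp ≤ homogeneousSubmodule (Fin (n+1)) A (m+1) := by
        rw [hNspdef]
        apply Submodule.span_le.mpr
        rintro p ⟨β, hβ1, hβ2, rfl⟩
        exact (mem_homogeneousSubmodule _ _).mpr
          (isHomogeneous_monomial _ (by rw [← hβ2]; rfl))
      exact hle hν
  have hν0 : ν = 0 := by
    have hνNsp : ν ∈ Submodule.span A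
        (NTermsDegI A {α : Exp n | α ∈ T ∧ m ≤ degE α} (m+1)) := by
      rw [← hNspdef]; exact hν
    have h2 : ν ∈ IdealDegI Pm g (m+1) ⊓ Submodule.span A
        (NTermsDegI A {α : Exp n | α ∈ T ∧ m ≤ degE α} (m+1)) :=
      Submodule.mem_inf.mpr ⟨hνId, hνNsp⟩
    rw [(hG.2 (m+1)).2] at h2
    simpa using h2
  have hweq : X j0 * g α = w := by rw [← hsum, hν0, add_zero]
  have hτ0k : ∀ k : Fin (n+1), (k : ℕ) < (j0 : ℕ) → ((Finsupp.single j0 1 + η0 : Exp n)) k = 0 := by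
    intro k hk
    have hkj0 : j0 ≠ k := by
      intro h; rw [h] at hk; omega
    have hkη0 : η0 k = 0 := by
      by_contra h
      have := Fin.le_def.mp (hj0min k (Finsupp.mem_support_iff.mpr h))
      omega
    have happ : ((Finsupp.single j0 1 + η0 : Exp n)) k = (Finsupp.single j0 1) k + η0 k :=
      Finsupp.add_apply _ _ _
    rw [Finsupp.single_apply, if_neg hkj0] at happ
    omega
  have hcw : coeff (Finsupp.single j0 1 + η0) w = 0 := by
    refine Submodule.span_induction ?_ ?_ ?_ ?_ hw
    · rintro p ⟨k, γ, hγ, hkL, rfl⟩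
      have hns : k ∉ (Finsupp.single j0 1 + η0).support :=
        fun hmem => (Finsupp.mem_support_iff.mp hmem) (hτ0k k hkL)
      rw [coeff_X_mul', if_neg hns]
    · exact coeff_zero _
    · intro x y _ _ hx' hy'
      rw [coeff_add, hx', hy', add_zero]
    · intro a x _ hx'
      rw [coeff_smul, hx', smul_zero]
  have hcτ0 : coeff (Finsupp.single j0 1 + η0) (X j0 * g α) = coeff η0 (g α) :=
    coeff_X_mul η0 j0 (g α)
  have hη0α : η0 ≠ α := by
    intro h
    exact hη0T' (by rw [h]; exact ⟨hαT'.1, hαT'.2⟩)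
  have hgη0 : coeff η0 (g α) ≠ 0 := by
    have hne := MvPolynomial.mem_support_iff.mp hη0
    have hmon : coeff η0 (monomial α (1:A)) = 0 := by
      rw [coeff_monomial, if_neg (fun hh => hη0α hh.symm)]
    intro h0
    rw [coeff_sub, hmon, h0, sub_zero] at hne
    exact hne rfl
  rw [hweq, hcw] at hcτ0
  exact hgη0 hcτ0.symm

end MB
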